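/- arXiv:2006.02502 — 2 statements merged into one kernel-verified Lean document; each statement's English description precedes it below -/
import Mathlib

section
/- Let v be a nonzero vector in ℝ^N and ξ a nonzero vector in ℝ^N, and set μ = S(v)⁻¹ξ (which is nonzero). Then ‖S(v)⁻¹ξ‖ ≤ ‖ξ‖ / (S_m + α_T‖v‖ + ((α_L − α_T)/‖v‖)·(⟨v,μ⟩²/‖μ‖²)). In particular ‖S(v)⁻¹ξ‖ ≤ ‖ξ‖/S_m. -/
open scoped InnerProductSpace

/-!
Testing `S(v)` against `μ` gives `⟪μ, S(v)μ⟫ = c ‖μ‖²`, where `c` is the denominator of the bound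
(a Rayleigh quotient of `S(v)`), so Cauchy–Schwarz yields `c ‖μ‖ ≤ ‖S(v)μ‖ = ‖ξ‖`; and `c ≥ S_m`
because the two remaining terms of `c` are nonnegative.
-/

section

variable {E : Type*} [NormedAddCommGroup E] [InnerProductSpace ℝ E]

theorem inner_self_smul_add_inner_smul (a b : ℝ) (v : E) {x : E} (hx : x ≠ 0) :
    ⟪x, a • x + (b * ⟪v, x⟫_ℝ) • v⟫_ℝ = (a + b * (⟪v, x⟫_ℝ ^ 2 / ‖x‖ ^ 2)) * ‖x‖ ^ 2 := by
  have hx2 : ‖x‖ ^ 2 ≠ 0 := by positivity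
  rw [inner_add_right, real_inner_smul_right, real_inner_smul_right, real_inner_self_eq_norm_sq,
    real_inner_comm x v]
  field_simp

theorem mul_norm_le_norm_of_inner_eq {x y : E} {c : ℝ} (h : ⟪x, y⟫_ℝ = c * ‖x‖ ^ 2) :
    c * ‖x‖ ≤ ‖y‖ := by
  rcases (norm_nonneg x).eq_or_lt with hx | hx
  · rw [← hx, mul_zero]
    exact norm_nonneg y
  · have hCS : c * ‖x‖ * ‖x‖ ≤ ‖y‖ * ‖x‖ := by
      rw [mul_assoc, ← sq, ← h, mul_comm]
      exact real_inner_le_norm x y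
    exact le_of_mul_le_mul_right hCS hx

end

theorem dispersion_inverse_norm_bound_general (N : ℕ) (Sm αL αT : ℝ)
    (hSm : 0 < Sm) (hαT : 0 ≤ αT) (hα : αT < αL)
    (v : EuclideanSpace ℝ (Fin N))
    (ξ : EuclideanSpace ℝ (Fin N)) (hξ : ξ ≠ 0)
    (T Sinv : EuclideanSpace ℝ (Fin N) →ₗ[ℝ] EuclideanSpace ℝ (Fin N))
    (hT : ∀ x, T x = (Sm + αT * ‖v‖) • x + (((αL - αT) / ‖v‖) * ⟪v, x⟫_ℝ) • v)
    (hinv₁ : ∀ x, T (Sinv x) = x)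
    (μ : EuclideanSpace ℝ (Fin N)) (hμ : μ = Sinv ξ) :
    μ ≠ 0 ∧
    ‖Sinv ξ‖ ≤ ‖ξ‖ / (Sm + αT * ‖v‖ + ((αL - αT) / ‖v‖) * (⟪v, μ⟫_ℝ ^ 2 / ‖μ‖ ^ 2)) ∧
    ‖Sinv ξ‖ ≤ ‖ξ‖ / Sm := by
  subst hμ
  set μ := Sinv ξ
  set c := Sm + αT * ‖v‖ + ((αL - αT) / ‖v‖) * (⟪v, μ⟫_ℝ ^ 2 / ‖μ‖ ^ 2)
  have hTμ : T μ = ξ := hinv₁ ξ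
  have hμ0 : μ ≠ 0 := fun h => hξ (by rw [← hTμ, h, map_zero])
  have hSmc : Sm ≤ c := by
    have hαv : 0 ≤ αT * ‖v‖ := by positivity
    have hrest : 0 ≤ ((αL - αT) / ‖v‖) * (⟪v, μ⟫_ℝ ^ 2 / ‖μ‖ ^ 2) :=
      mul_nonneg (div_nonneg (sub_nonneg.mpr hα.le) (norm_nonneg v)) (by positivity)
    linarith
  have hcμ : c * ‖μ‖ ≤ ‖ξ‖ := by
    refine mul_norm_le_norm_of_inner_eq ?_
    rw [← hTμ, hT, inner_self_smul_add_inner_smul _ _ _ hμ0]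
  refine ⟨hμ0, (le_div_iff₀' (hSm.trans_le hSmc)).mpr hcμ,
    (le_div_iff₀' hSm).mpr ((mul_le_mul_of_nonneg_right hSmc (norm_nonneg μ)).trans hcμ)⟩

/-- With `μ = S(v)⁻¹ξ` (nonzero),
`‖S(v)⁻¹ξ‖ ≤ ‖ξ‖ / (S_m + α_T‖v‖ + ((α_L − α_T)/‖v‖)·(⟨v,μ⟩²/‖μ‖²))`,
and in particular `‖S(v)⁻¹ξ‖ ≤ ‖ξ‖/S_m`. -/
theorem dispersion_inverse_norm_bound (N : ℕ) (hN : 1 ≤ N) (Sm αL αT : ℝ)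
    (hSm : 0 < Sm) (hαT : 0 ≤ αT) (hα : αT < αL)
    (v : EuclideanSpace ℝ (Fin N)) (hv : v ≠ 0)
    (ξ : EuclideanSpace ℝ (Fin N)) (hξ : ξ ≠ 0)
    (T Sinv : EuclideanSpace ℝ (Fin N) →ₗ[ℝ] EuclideanSpace ℝ (Fin N))
    (hT : ∀ x, T x = (Sm + αT * ‖v‖) • x + (((αL - αT) / ‖v‖) * ⟪v, x⟫_ℝ) • v)
    (hinv₁ : ∀ x, T (Sinv x) = x) (hinv₂ : ∀ x, Sinv (T x) = x)
    (μ : EuclideanSpace ℝ (Fin N)) (hμ : μ = Sinv ξ) :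
    μ ≠ 0 ∧
    ‖Sinv ξ‖ ≤ ‖ξ‖ / (Sm + αT * ‖v‖ + ((αL - αT) / ‖v‖) * (⟪v, μ⟫_ℝ ^ 2 / ‖μ‖ ^ 2)) ∧
    ‖Sinv ξ‖ ≤ ‖ξ‖ / Sm :=
  dispersion_inverse_norm_bound_general N Sm αL αT hSm hαT hα v ξ hξ T Sinv hT hinv₁ μ hμ
end

section
/- Assume additionally α_T > 0. Then there exists a constant C > 0, depending only on S_m and α_T, such that for every nonzero vector v in ℝ^N and every vector ξ in ℝ^N one has ‖S(v)^{-1/2}ξ‖ ≤ C (1 + ‖v‖)^{-1/2} ‖ξ‖. -/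
open scoped InnerProductSpace

/-- For `α_T > 0`, there is `C > 0` depending only on `S_m` and `α_T` with
`‖S(v)^{-1/2}ξ‖ ≤ C (1 + ‖v‖)^{-1/2} ‖ξ‖`. -/
theorem dispersion_inv_sqrt_bound (Sm αT : ℝ) (hSm : 0 < Sm) (hαT : 0 < αT) :
    ∃ C > 0, ∀ (N : ℕ), 1 ≤ N → ∀ αL : ℝ, αT < αL →
      ∀ v : EuclideanSpace ℝ (Fin N), v ≠ 0 →
      ∀ T R Rinv : EuclideanSpace ℝ (Fin N) →ₗ[ℝ] EuclideanSpace ℝ (Fin N),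
        (∀ ξ, T ξ = (Sm + αT * ‖v‖) • ξ + (((αL - αT) / ‖v‖) * ⟪v, ξ⟫_ℝ) • v) →
        (∀ x y, ⟪R x, y⟫_ℝ = ⟪x, R y⟫_ℝ) → (∀ ξ, ξ ≠ 0 → 0 < ⟪R ξ, ξ⟫_ℝ) →
        R.comp R = T →
        (∀ ξ, R (Rinv ξ) = ξ) → (∀ ξ, Rinv (R ξ) = ξ) →
        ∀ ξ : EuclideanSpace ℝ (Fin N),
          ‖Rinv ξ‖ ≤ C * (1 + ‖v‖) ^ (-(1/2) : ℝ) * ‖ξ‖ := by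
  set c : ℝ := min Sm αT with hc
  have hcpos : 0 < c := lt_min hSm hαT
  refine ⟨c ^ (-(1/2) : ℝ), Real.rpow_pos_of_pos hcpos _, ?_⟩
  intro N hN αL hαL v hv T R Rinv hT hRsym hRpos hcomp hRRinv hRinvR ξ
  set w := Rinv ξ with hw
  have hvn : 0 < ‖v‖ := norm_pos_iff.mpr hv
  have ht : 0 < 1 + ‖v‖ := by linarith
  -- R (R w) = T w
  have hRRw : R (R w) = T w := by
    have := LinearMap.congr_fun hcomp w
    simpa using this
  have hξ : R w = ξ := hRRinv ξ
  -- key inequality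
  have key : (Sm + αT * ‖v‖) * ‖w‖ ^ 2 ≤ ‖ξ‖ ^ 2 := by
    have h1 : ‖ξ‖ ^ 2 = ⟪T w, w⟫_ℝ := by
      calc ‖ξ‖ ^ 2 = ⟪ξ, ξ⟫_ℝ := (real_inner_self_eq_norm_sq ξ).symm
        _ = ⟪R w, R w⟫_ℝ := by rw [hξ]
        _ = ⟪w, R (R w)⟫_ℝ := hRsym w (R w)
        _ = ⟪w, T w⟫_ℝ := by rw [hRRw]
        _ = ⟪T w, w⟫_ℝ := real_inner_comm _ _
    have h2 : ⟪T w, w⟫_ℝ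
        = (Sm + αT * ‖v‖) * ‖w‖ ^ 2 + ((αL - αT) / ‖v‖) * ⟪v, w⟫_ℝ ^ 2 := by
      rw [hT w, inner_add_left, real_inner_smul_left, real_inner_smul_left,
        real_inner_self_eq_norm_sq]
      ring
    have h3 : 0 ≤ ((αL - αT) / ‖v‖) * ⟪v, w⟫_ℝ ^ 2 :=
      mul_nonneg (div_nonneg (by linarith) hvn.le) (sq_nonneg _)
    rw [h1, h2]; linarith
  have hct : c * (1 + ‖v‖) ≤ Sm + αT * ‖v‖ := by
    have h1 : c ≤ Sm := min_le_left _ _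
    have h2 : c ≤ αT := min_le_right _ _
    have h3 : c * ‖v‖ ≤ αT * ‖v‖ := mul_le_mul_of_nonneg_right h2 hvn.le
    nlinarith
  have key2 : c * (1 + ‖v‖) * ‖w‖ ^ 2 ≤ ‖ξ‖ ^ 2 := by
    have := mul_le_mul_of_nonneg_right hct (sq_nonneg ‖w‖)
    linarith
  -- rewrite RHS as (c * (1+‖v‖))^(-1/2) * ‖ξ‖
  have hmul : c ^ (-(1/2) : ℝ) * (1 + ‖v‖) ^ (-(1/2) : ℝ)
      = (c * (1 + ‖v‖)) ^ (-(1/2) : ℝ) :=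
    (Real.mul_rpow hcpos.le ht.le).symm
  rw [hmul]
  set s : ℝ := (c * (1 + ‖v‖)) ^ (-(1/2) : ℝ) with hs
  have hctpos : 0 < c * (1 + ‖v‖) := mul_pos hcpos ht
  have hspos : 0 < s := Real.rpow_pos_of_pos hctpos _
  have hssq : s ^ 2 = (c * (1 + ‖v‖))⁻¹ := by
    rw [hs, ← Real.rpow_natCast ((c * (1 + ‖v‖)) ^ (-(1/2) : ℝ)) 2,
      ← Real.rpow_mul hctpos.le]
    norm_num [Real.rpow_neg_one, mul_inv]
  have hsq : ‖w‖ ^ 2 ≤ (s * ‖ξ‖) ^ 2 := by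
    have : ‖w‖ ^ 2 ≤ ‖ξ‖ ^ 2 / (c * (1 + ‖v‖)) := by
      rw [le_div_iff₀ hctpos]; linarith
    calc ‖w‖ ^ 2 ≤ ‖ξ‖ ^ 2 / (c * (1 + ‖v‖)) := this
      _ = (s * ‖ξ‖) ^ 2 := by rw [mul_pow, hssq]; field_simp
  nlinarith [norm_nonneg w, mul_nonneg hspos.le (norm_nonneg ξ), hsq]
end
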